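/- Oriented version of Dunwoody's tree construction. Let V be a set and let 𝓔 be a nonempty collection of subsets of V such that: 𝓔 is finitely separating; 𝓔 is nested; ∅ ∉ 𝓔; V ∉ 𝓔; and for each e ∈ 𝓔, the complement eᶜ does not belong to 𝓔. For e ∈ 𝓔 set ι(e) = {d ∈ 𝓔 : e ⊆ d or eᶜ ⊊ d} and τ'(e) = {d ∈ 𝓔 : e ⊊ d or eᶜ ⊆ d}. Let U(𝓔) be the simple graph whose vertex set is {ι(e) : e ∈ 𝓔} ∪ {τ'(e) : e ∈ 𝓔} and in which x and y are adjacent if and only if there exists e ∈ 𝓔 with {x,y} = {ι(e), τ'(e)}. Then U(𝓔) is a tree (connected and acyclic), and for any two vertices x and y of U(𝓔) the graph distance between x and y in U(𝓔) equals the cardinality of the symmetric difference x ∆ y. -/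

import Mathlib

/-!
Every vertex is `ι(s)` for a set `s` that is nested with all members of `𝓔` and is neither empty
nor everything: `ι(e)` itself, and `τ'(e) = ι(eᶜ)`. For `v ∈ s` and `w ∉ s`, `ι(s)` and
`{d ∈ 𝓔 | v ∈ d}` differ only in sets separating `v` from `w` and in `sᶜ`, so finite separation
makes `x ∆ y` finite for all vertices `x`, `y`.

The two ends of the edge of `e ∈ 𝓔` differ exactly in `e`, and different edges in different sets.
Hence a walk from `x` to `y` crosses, for each `d ∈ x ∆ y`, the edge of `d`: this gives
`|x ∆ y| ≤ dist x y` and makes every edge a bridge. Conversely, for `e ∈ x \ y` both `ι(e)` and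
`τ'(e) = ι(e) \ {e}` lie between `x` and `y` (they contain `x ∩ y` and lie in `x ∪ y`); splitting
`x ∆ y` there gives, by induction, a walk of length `|x ∆ y|`.
-/

/-- `ι(e) = {d ∈ 𝓔 : e ⊆ d or eᶜ ⊊ d}`. -/
def dunwoodyIota {V : Type*} (𝓔 : Set (Set V)) (e : Set V) : Set (Set V) :=
  {d ∈ 𝓔 | e ⊆ d ∨ eᶜ ⊂ d}

/-- `τ'(e) = {d ∈ 𝓔 : e ⊊ d or eᶜ ⊆ d}`. -/
def dunwoodyTau' {V : Type*} (𝓔 : Set (Set V)) (e : Set V) : Set (Set V) :=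
  {d ∈ 𝓔 | e ⊂ d ∨ eᶜ ⊆ d}

open Set SimpleGraph
open scoped symmDiff

section LabelledWalks

variable {α β : Type*} {G : SimpleGraph α} {f : α → Set β} {x y : α}

theorem SimpleGraph.Walk.symmDiff_subset_biUnion_darts (p : G.Walk x y) :
    f x ∆ f y ⊆ ⋃ d ∈ p.darts, f d.fst ∆ f d.snd := by
  induction p with
  | nil => simp
  | @cons x z y h p ih =>
    refine (symmDiff_triangle (f x) (f z) (f y)).trans ?_
    simp only [darts_cons, List.mem_cons, iUnion_or, iUnion_union_distrib, iUnion_iUnion_eq_left]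
    exact union_subset_union_right _ ih

theorem SimpleGraph.Walk.encard_symmDiff_le_length
    (hf : ∀ ⦃x y⦄, G.Adj x y → (f x ∆ f y).encard ≤ 1) (p : G.Walk x y) :
    (f x ∆ f y).encard ≤ p.length := by
  induction p with
  | nil => simp
  | @cons x z y h p ih =>
    calc (f x ∆ f y).encard ≤ (f x ∆ f z ∪ f z ∆ f y).encard :=
          encard_le_encard (symmDiff_triangle _ _ _)
      _ ≤ (f x ∆ f z).encard + (f z ∆ f y).encard := encard_union_le _ _
      _ ≤ 1 + p.length := add_le_add (hf h) ih
      _ = (cons h p).length := by rw [length_cons, add_comm]; push_cast; rfl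

/-- Each edge is a bridge: a walk avoiding it still has to cross an edge with the same label. -/
theorem SimpleGraph.isAcyclic_of_symmDiff_eq_singleton
    (hf : ∀ ⦃x y⦄, G.Adj x y → ∃ b, f x ∆ f y = {b})
    (hinj : ∀ ⦃x y x' y'⦄, G.Adj x y → G.Adj x' y' →
      f x ∆ f y = f x' ∆ f y' → s(x, y) = s(x', y')) :
    G.IsAcyclic := by
  refine isAcyclic_iff_forall_adj_isBridge.2 fun u v huv ⟨p⟩ => ?_
  obtain ⟨b, hb⟩ := hf huv
  obtain ⟨d, -, hbd⟩ :=
    mem_iUnion₂.1 (p.symmDiff_subset_biUnion_darts (f := f) (by rw [hb]; rfl))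
  obtain ⟨hadj, hne⟩ := deleteEdges_adj.1 d.adj
  obtain ⟨b', hb'⟩ := hf hadj
  rw [hb', mem_singleton_iff] at hbd
  exact hne (hinj hadj huv (by rw [hb', hb, hbd]))

end LabelledWalks

theorem Set.ncard_symmDiff_eq_add_of_between {α : Type*} {x y z : Set α} (h₁ : x ∩ y ⊆ z)
    (h₂ : z ⊆ x ∪ y) (hxz : (x ∆ z).Finite) (hzy : (z ∆ y).Finite) :
    (x ∆ y).ncard = (x ∆ z).ncard + (z ∆ y).ncard := by
  have hbetween (a : α) : (a ∈ x → a ∈ y → a ∈ z) ∧ (a ∈ z → a ∈ x ∨ a ∈ y) :=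
    ⟨fun hx hy => h₁ ⟨hx, hy⟩, @h₂ a⟩
  have hunion : x ∆ y = x ∆ z ∪ z ∆ y := by
    ext a
    have := hbetween a
    simp only [mem_symmDiff, mem_union]
    tauto
  have hdisj : Disjoint (x ∆ z) (z ∆ y) := by
    refine disjoint_left.2 fun a ha ha' => ?_
    have := hbetween a
    simp only [mem_symmDiff] at ha ha'
    tauto
  rw [hunion, ncard_union_eq hdisj hxz hzy]

namespace Dunwoody

variable {V : Type*} {𝓔 : Set (Set V)} {s t d d' e : Set V} {v w : V}

def Nested (s t : Set V) : Prop :=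
  s ⊆ t ∨ t ⊆ s ∨ s ⊆ tᶜ ∨ tᶜ ⊆ s

lemma nested_of_inter_eq_empty
    (h : s ∩ t = ∅ ∨ s ∩ tᶜ = ∅ ∨ sᶜ ∩ t = ∅ ∨ sᶜ ∩ tᶜ = ∅) : Nested s t := by
  simp only [← disjoint_iff_inter_eq_empty, disjoint_compl_left_iff_subset,
    disjoint_compl_right_iff_subset] at h
  rw [← subset_compl_iff_disjoint_right, compl_subset_comm] at h
  unfold Nested
  tauto

lemma Nested.compl_right (h : Nested s t) : Nested s tᶜ := by
  unfold Nested at *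
  rw [compl_compl]
  tauto

def IsFinitelySeparating (𝓔 : Set (Set V)) : Prop :=
  ∀ v w : V, ({d ∈ 𝓔 | v ∈ d} ∆ {d ∈ 𝓔 | w ∈ d}).Finite

structure IsNestedCut (𝓔 : Set (Set V)) (s : Set V) : Prop where
  nonempty : s.Nonempty
  compl_nonempty : sᶜ.Nonempty
  nested : ∀ d ∈ 𝓔, Nested d s

lemma IsNestedCut.compl (hs : IsNestedCut 𝓔 s) : IsNestedCut 𝓔 sᶜ :=
  ⟨hs.compl_nonempty, by rw [compl_compl]; exact hs.nonempty,
    fun d hd => (hs.nested d hd).compl_right⟩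

lemma dunwoodyTau'_eq_dunwoodyIota_compl (𝓔 : Set (Set V)) (e : Set V) :
    dunwoodyTau' 𝓔 e = dunwoodyIota 𝓔 eᶜ := by
  ext d
  simp only [dunwoodyTau', dunwoodyIota, mem_ofPred_eq, compl_compl, or_comm]

lemma mem_dunwoodyIota_of_subset (hd : d ∈ dunwoodyIota 𝓔 s) (hd' : d' ∈ 𝓔) (h : d ⊆ d') :
    d' ∈ dunwoodyIota 𝓔 s :=
  ⟨hd', hd.2.imp (·.trans h) (·.trans_subset h)⟩

lemma not_disjoint_of_mem_dunwoodyIota (hs : s.Nonempty) (hs' : sᶜ.Nonempty)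
    (hd : d ∈ dunwoodyIota 𝓔 s) (hd' : d' ∈ dunwoodyIota 𝓔 s) : ¬Disjoint d d' := by
  intro hdisj
  rcases hd.2 with h | h <;> rcases hd'.2 with h' | h'
  · obtain ⟨v, hv⟩ := hs
    exact disjoint_left.1 hdisj (h hv) (h' hv)
  · exact h'.ne (h'.subset.antisymm
      (hdisj.symm.subset_compl_right.trans (compl_subset_compl.2 h)))
  · exact h.ne (h.subset.antisymm
      (hdisj.subset_compl_right.trans (compl_subset_compl.2 h')))
  · obtain ⟨v, hv⟩ := hs'
    exact disjoint_left.1 hdisj (h.subset hv) (h'.subset hv)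

lemma mem_dunwoodyIota_of_compl_ssubset (hes : Nested e s) (he : e ∈ 𝓔)
    (he' : e ∉ dunwoodyIota 𝓔 s) (hd : d ∈ 𝓔) (h : eᶜ ⊂ d) : d ∈ dunwoodyIota 𝓔 s := by
  rcases hes with hes | hes | hes | hes
  · exact ⟨hd, Or.inr ((compl_subset_compl.2 hes).trans_ssubset h)⟩
  · exact absurd ⟨he, Or.inl hes⟩ he'
  · exact ⟨hd, Or.inl ((subset_compl_comm.1 hes).trans h.subset)⟩
  · rcases Set.eq_or_ssubset_of_subset hes with rfl | hes
    · exact ⟨hd, Or.inl (compl_compl s ▸ h.subset)⟩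
    · exact absurd ⟨he, Or.inr hes⟩ he'

lemma inter_subset_dunwoodyIota (h𝓔 : ∀ d ∈ 𝓔, ∀ d' ∈ 𝓔, Nested d d')
    (hs : s.Nonempty) (hs' : sᶜ.Nonempty)
    (he : e ∈ dunwoodyIota 𝓔 s) (he' : e ∉ dunwoodyIota 𝓔 t) :
    dunwoodyIota 𝓔 s ∩ dunwoodyIota 𝓔 t ⊆ dunwoodyIota 𝓔 e := by
  rintro d ⟨hds, hdt⟩
  rcases h𝓔 e he.1 d hds.1 with h | h | h | h
  · exact ⟨hds.1, Or.inl h⟩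
  · exact absurd (mem_dunwoodyIota_of_subset hdt he.1 h) he'
  · exact absurd (subset_compl_iff_disjoint_right.1 h)
      (not_disjoint_of_mem_dunwoodyIota hs hs' he hds)
  · rcases Set.eq_or_ssubset_of_subset (compl_subset_comm.1 h) with rfl | h
    · exact absurd disjoint_compl_right (not_disjoint_of_mem_dunwoodyIota hs hs' he hds)
    · exact ⟨hds.1, Or.inr h⟩

lemma dunwoodyIota_subset_union (ht : ∀ d ∈ 𝓔, Nested d t)
    (he : e ∈ dunwoodyIota 𝓔 s) (he' : e ∉ dunwoodyIota 𝓔 t) :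
    dunwoodyIota 𝓔 e ⊆ dunwoodyIota 𝓔 s ∪ dunwoodyIota 𝓔 t := by
  rintro d ⟨hd, h | h⟩
  · exact Or.inl (mem_dunwoodyIota_of_subset he hd h)
  · exact Or.inr (mem_dunwoodyIota_of_compl_ssubset (ht e he.1) he.1 he' hd h)

lemma symmDiff_dunwoodyIota_subset (hs : ∀ d ∈ 𝓔, Nested d s) (hv : v ∈ s) (hw : w ∉ s) :
    dunwoodyIota 𝓔 s ∆ {d ∈ 𝓔 | v ∈ d} ⊆ {d ∈ 𝓔 | v ∈ d} ∆ {d ∈ 𝓔 | w ∈ d} ∪ {sᶜ} := by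
  rintro d (⟨⟨hd, h | h⟩, hvd⟩ | ⟨⟨hd, hvd⟩, hds⟩)
  · exact absurd ⟨hd, h hv⟩ hvd
  · exact Or.inl (Or.inr ⟨⟨hd, h.subset hw⟩, hvd⟩)
  · rcases hs d hd with h | h | h | h
    · exact Or.inl (Or.inl ⟨⟨hd, hvd⟩, fun hwd => hw (h hwd.2)⟩)
    · exact absurd ⟨hd, Or.inl h⟩ hds
    · exact absurd hv (h hvd)
    · rcases Set.eq_or_ssubset_of_subset h with rfl | h
      · exact Or.inr rfl
      · exact absurd ⟨hd, Or.inr h⟩ hds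

lemma finite_symmDiff_dunwoodyIota (hsep : IsFinitelySeparating 𝓔)
    (hs : IsNestedCut 𝓔 s) (ht : IsNestedCut 𝓔 t) :
    (dunwoodyIota 𝓔 s ∆ dunwoodyIota 𝓔 t).Finite := by
  obtain ⟨v, hv⟩ := hs.nonempty
  obtain ⟨w, hw⟩ := hs.compl_nonempty
  obtain ⟨v', hv'⟩ := ht.nonempty
  obtain ⟨w', hw'⟩ := ht.compl_nonempty
  have hsv := ((hsep v w).union (finite_singleton _)).subset
    (symmDiff_dunwoodyIota_subset hs.nested hv hw)
  have htv := ((hsep v' w').union (finite_singleton _)).subset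
    (symmDiff_dunwoodyIota_subset ht.nested hv' hw')
  rw [symmDiff_comm] at htv
  refine (hsv.union ((hsep v v').union htv)).subset ?_
  exact (symmDiff_triangle _ _ _).trans
    (union_subset_union_right _ (symmDiff_triangle _ _ _))

structure IsProperNestedFamily (𝓔 : Set (Set V)) : Prop where
  nested : ∀ e ∈ 𝓔, ∀ f ∈ 𝓔, Nested e f
  empty_notMem : ∅ ∉ 𝓔
  univ_notMem : univ ∉ 𝓔
  compl_notMem : ∀ e ∈ 𝓔, eᶜ ∉ 𝓔

abbrev DunwoodyVertex (𝓔 : Set (Set V)) :=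
  {x : Set (Set V) // (∃ e ∈ 𝓔, x = dunwoodyIota 𝓔 e) ∨ ∃ e ∈ 𝓔, x = dunwoodyTau' 𝓔 e}

def dunwoodyGraph (𝓔 : Set (Set V)) : SimpleGraph (DunwoodyVertex 𝓔) where
  Adj x y := x ≠ y ∧ ∃ e ∈ 𝓔,
    ({x.1, y.1} : Set (Set (Set V))) = {dunwoodyIota 𝓔 e, dunwoodyTau' 𝓔 e}
  symm := ⟨fun _ _ ⟨hne, e, he, hxy⟩ => ⟨hne.symm, e, he, pair_comm _ _ ▸ hxy⟩⟩
  loopless := ⟨fun _ h => h.1 rfl⟩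

namespace IsProperNestedFamily

lemma isNestedCut (h : IsProperNestedFamily 𝓔) (he : e ∈ 𝓔) : IsNestedCut 𝓔 e :=
  ⟨nonempty_iff_ne_empty.2 fun h0 => h.empty_notMem (h0 ▸ he),
    nonempty_compl.2 fun h0 => h.univ_notMem (h0 ▸ he), fun d hd => h.nested d hd e he⟩

lemma dunwoodyTau'_eq_diff (h : IsProperNestedFamily 𝓔) (he : e ∈ 𝓔) :
    dunwoodyTau' 𝓔 e = dunwoodyIota 𝓔 e \ {e} := by
  ext d
  constructor
  · rintro ⟨hd, h' | h'⟩
    · exact ⟨⟨hd, Or.inl h'.subset⟩, h'.ne'⟩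
    · refine ⟨⟨hd, Or.inr (h'.ssubset_of_ne fun hc => h.compl_notMem e he (hc ▸ hd))⟩, ?_⟩
      rintro rfl
      obtain ⟨v, hv⟩ := (h.isNestedCut he).compl_nonempty
      exact hv (h' hv)
  · rintro ⟨⟨hd, h' | h'⟩, hde⟩
    · exact ⟨hd, Or.inl (h'.ssubset_of_ne (Ne.symm hde))⟩
    · exact ⟨hd, Or.inr h'.subset⟩

lemma symmDiff_eq_singleton (h : IsProperNestedFamily 𝓔) (he : e ∈ 𝓔) {x y : Set (Set V)}
    (hxy : ({x, y} : Set (Set (Set V))) = {dunwoodyIota 𝓔 e, dunwoodyTau' 𝓔 e}) :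
    x ∆ y = {e} := by
  have key : dunwoodyIota 𝓔 e ∆ dunwoodyTau' 𝓔 e = {e} := by
    rw [h.dunwoodyTau'_eq_diff he]
    ext d
    have : e ∈ dunwoodyIota 𝓔 e := ⟨he, Or.inl subset_rfl⟩
    simp only [mem_symmDiff, mem_sdiff, mem_singleton_iff]
    constructor
    · tauto
    · rintro rfl; tauto
  rcases pair_eq_pair_iff.1 hxy with ⟨rfl, rfl⟩ | ⟨rfl, rfl⟩
  · exact key
  · rw [symmDiff_comm, key]

end IsProperNestedFamily

namespace DunwoodyVertex

lemma subset (x : DunwoodyVertex 𝓔) : x.1 ⊆ 𝓔 := by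
  rcases x.2 with ⟨e, -, hx⟩ | ⟨e, -, hx⟩ <;> exact hx ▸ sep_subset _ _

lemma exists_isNestedCut (h : IsProperNestedFamily 𝓔) (x : DunwoodyVertex 𝓔) :
    ∃ s, IsNestedCut 𝓔 s ∧ x.1 = dunwoodyIota 𝓔 s := by
  rcases x.2 with ⟨e, he, hx⟩ | ⟨e, he, hx⟩
  · exact ⟨e, h.isNestedCut he, hx⟩
  · exact ⟨eᶜ, (h.isNestedCut he).compl, hx.trans (dunwoodyTau'_eq_dunwoodyIota_compl _ _)⟩

lemma finite_symmDiff (h : IsProperNestedFamily 𝓔) (hsep : IsFinitelySeparating 𝓔)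
    (x y : DunwoodyVertex 𝓔) : (x.1 ∆ y.1).Finite := by
  obtain ⟨s, hs, hx⟩ := x.exists_isNestedCut h
  obtain ⟨t, ht, hy⟩ := y.exists_isNestedCut h
  rw [hx, hy]
  exact finite_symmDiff_dunwoodyIota hsep hs ht

lemma dunwoodyIota_between (h : IsProperNestedFamily 𝓔) (x y : DunwoodyVertex 𝓔)
    (hex : e ∈ x.1) (hey : e ∉ y.1) :
    x.1 ∩ y.1 ⊆ dunwoodyIota 𝓔 e ∧ dunwoodyIota 𝓔 e ⊆ x.1 ∪ y.1 := by
  obtain ⟨s, hs, hx⟩ := x.exists_isNestedCut h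
  obtain ⟨t, ht, hy⟩ := y.exists_isNestedCut h
  rw [hx] at hex ⊢
  rw [hy] at hey ⊢
  exact ⟨inter_subset_dunwoodyIota h.nested hs.nonempty hs.compl_nonempty hex hey,
    dunwoodyIota_subset_union ht.nested hex hey⟩

end DunwoodyVertex

namespace IsProperNestedFamily

lemma dunwoodyGraph_adj_iff (h : IsProperNestedFamily 𝓔) {x y : DunwoodyVertex 𝓔} :
    (dunwoodyGraph 𝓔).Adj x y ↔ ∃ e ∈ 𝓔,
      ({x.1, y.1} : Set (Set (Set V))) = {dunwoodyIota 𝓔 e, dunwoodyTau' 𝓔 e} := by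
  refine ⟨And.right, fun ⟨e, he, hxy⟩ => ⟨?_, e, he, hxy⟩⟩
  rintro rfl
  simpa using h.symmDiff_eq_singleton he hxy

lemma isAcyclic_dunwoodyGraph (h : IsProperNestedFamily 𝓔) : (dunwoodyGraph 𝓔).IsAcyclic := by
  refine isAcyclic_of_symmDiff_eq_singleton (f := Subtype.val)
    (fun x y ⟨_, e, he, hxy⟩ => ⟨e, h.symmDiff_eq_singleton he hxy⟩) ?_
  rintro x y x' y' ⟨_, e, he, hxy⟩ ⟨_, e', he', hxy'⟩ hsymm
  rw [h.symmDiff_eq_singleton he hxy, h.symmDiff_eq_singleton he' hxy',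
    singleton_eq_singleton_iff] at hsymm
  subst hsymm
  rcases pair_eq_pair_iff.1 (hxy.trans hxy'.symm) with ⟨h1, h2⟩ | ⟨h1, h2⟩
  · rw [Subtype.ext h1, Subtype.ext h2]
  · rw [Subtype.ext h1, Subtype.ext h2, Sym2.eq_swap]

lemma exists_walk_length_eq (h : IsProperNestedFamily 𝓔) (hsep : IsFinitelySeparating 𝓔)
    (x y : DunwoodyVertex 𝓔) :
    ∃ p : (dunwoodyGraph 𝓔).Walk x y, p.length = (x.1 ∆ y.1).ncard := by
  induction hn : (x.1 ∆ y.1).ncard using Nat.strong_induction_on generalizing x y with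
  | _ n ih =>
  obtain rfl | hxy := eq_or_ne x y
  · exact ⟨.nil, by simp [← hn]⟩
  obtain ⟨e, he⟩ : (x.1 ∆ y.1).Nonempty := by
    rw [nonempty_iff_ne_empty, Ne, ← bot_eq_empty, symmDiff_eq_bot]
    exact Subtype.coe_ne_coe.2 hxy
  -- Both ends of the edge of `e` lie between `x` and `y`, so `x ∆ y` splits as
  -- `(x ∆ ι e) ⊔ {e} ⊔ (τ' e ∆ y)` with both outer parts shorter.
  suffices key : ∀ x y : DunwoodyVertex 𝓔, e ∈ x.1 → e ∉ y.1 → (x.1 ∆ y.1).ncard = n →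
      ∃ p : (dunwoodyGraph 𝓔).Walk x y, p.length = n by
    rcases mem_symmDiff.1 he with ⟨hx, hy⟩ | ⟨hy, hx⟩
    · exact key x y hx hy hn
    · obtain ⟨p, hp⟩ := key y x hy hx (by rwa [symmDiff_comm])
      exact ⟨p.reverse, by rw [Walk.length_reverse, hp]⟩
  intro x y hx hy hn
  have he𝓔 : e ∈ 𝓔 := x.subset hx
  let a : DunwoodyVertex 𝓔 := ⟨dunwoodyIota 𝓔 e, .inl ⟨e, he𝓔, rfl⟩⟩
  let b : DunwoodyVertex 𝓔 := ⟨dunwoodyTau' 𝓔 e, .inr ⟨e, he𝓔, rfl⟩⟩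
  have hab : (dunwoodyGraph 𝓔).Adj a b := (h.dunwoodyGraph_adj_iff).2 ⟨e, he𝓔, rfl⟩
  have hb : b.1 = a.1 \ {e} := h.dunwoodyTau'_eq_diff he𝓔
  obtain ⟨hinter, hunion⟩ := DunwoodyVertex.dunwoodyIota_between h x y hx hy
  have hfin := DunwoodyVertex.finite_symmDiff h hsep
  have hsplit_a : n = (x.1 ∆ a.1).ncard + (a.1 ∆ y.1).ncard := by
    rw [← hn]; exact ncard_symmDiff_eq_add_of_between hinter hunion (hfin _ _) (hfin _ _)
  have hsplit_b : (a.1 ∆ y.1).ncard = 1 + (b.1 ∆ y.1).ncard := by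
    rw [ncard_symmDiff_eq_add_of_between (z := b.1) _ _ (hfin _ _) (hfin _ _),
      h.symmDiff_eq_singleton he𝓔 rfl, ncard_singleton]
    · rw [hb]; exact fun d ⟨hda, hdy⟩ => ⟨hda, fun hde => hy (hde ▸ hdy)⟩
    · rw [hb]; exact sdiff_subset.trans subset_union_left
  obtain ⟨p, hp⟩ := ih _ (by omega) x a rfl
  obtain ⟨q, hq⟩ := ih _ (by omega) b y rfl
  exact ⟨p.append (.cons hab q), by rw [Walk.length_append, Walk.length_cons]; omega⟩

lemma dist_dunwoodyGraph (h : IsProperNestedFamily 𝓔) (hsep : IsFinitelySeparating 𝓔)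
    (x y : DunwoodyVertex 𝓔) :
    (dunwoodyGraph 𝓔).dist x y = (x.1 ∆ y.1).ncard := by
  obtain ⟨p, hp⟩ := h.exists_walk_length_eq hsep x y
  obtain ⟨q, hq⟩ := p.reachable.exists_walk_length_eq_dist
  refine le_antisymm (hp ▸ dist_le p) ?_
  rw [← hq, ← Nat.cast_le (α := ℕ∞), (DunwoodyVertex.finite_symmDiff h hsep x y).cast_ncard_eq]
  refine q.encard_symmDiff_le_length fun a b hab => ?_
  obtain ⟨e, he, hab⟩ := (h.dunwoodyGraph_adj_iff).1 hab
  rw [h.symmDiff_eq_singleton he hab, encard_singleton]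

end IsProperNestedFamily

end Dunwoody

/-- **Oriented version of Dunwoody's tree construction.** -/
theorem dunwoody_oriented_tree {V : Type*} (𝓔 : Set (Set V))
    (hne : 𝓔.Nonempty)
    (hsep : ∀ v w : V, (symmDiff {d ∈ 𝓔 | v ∈ d} {d ∈ 𝓔 | w ∈ d}).Finite)
    (hnested : ∀ e ∈ 𝓔, ∀ f ∈ 𝓔,
      e ∩ f = ∅ ∨ e ∩ fᶜ = ∅ ∨ eᶜ ∩ f = ∅ ∨ eᶜ ∩ fᶜ = ∅)
    (hempty : ∅ ∉ 𝓔) (huniv : Set.univ ∉ 𝓔)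
    (hcompl : ∀ e ∈ 𝓔, eᶜ ∉ 𝓔) :
    ∃ T : SimpleGraph {x : Set (Set V) //
        (∃ e ∈ 𝓔, x = dunwoodyIota 𝓔 e) ∨ ∃ e ∈ 𝓔, x = dunwoodyTau' 𝓔 e},
      (∀ x y, T.Adj x y ↔ ∃ e ∈ 𝓔,
        ({x.1, y.1} : Set (Set (Set V))) = {dunwoodyIota 𝓔 e, dunwoodyTau' 𝓔 e}) ∧
      T.IsTree ∧
      ∀ x y, T.dist x y = (symmDiff x.1 y.1).ncard := by
  have h : Dunwoody.IsProperNestedFamily 𝓔 :=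
    ⟨fun e he f hf => Dunwoody.nested_of_inter_eq_empty (hnested e he f hf), hempty, huniv, hcompl⟩
  refine ⟨Dunwoody.dunwoodyGraph 𝓔, fun x y => h.dunwoodyGraph_adj_iff,
    ⟨(connected_iff_exists_forall_reachable _).2 ?_, h.isAcyclic_dunwoodyGraph⟩,
    h.dist_dunwoodyGraph hsep⟩
  obtain ⟨e, he⟩ := hne
  exact ⟨⟨_, .inl ⟨e, he, rfl⟩⟩, fun y => (h.exists_walk_length_eq hsep _ y).choose.reachable⟩
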